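/- arXiv:1004.1703 — 4 statements merged into one kernel-verified Lean document; each statement's English description precedes it below -/
import Mathlib

section
/- Let K be a finite group, H a normal subgroup of K such that K/H is cyclic, and A a divisible abelian group. Let (Ĥ, ι, π) be a central A-extension of H and let φ : K → Aut(Ĥ) be an action of K on Ĥ that lifts the conjugation action of K on H, fixes A pointwise, and is inner-compatible. Assume there is a cyclic subgroup C of K with K = H·C and, setting D = C ∩ H, a homomorphism θ : D → Ĥ with π ∘ θ equal to the inclusion of D into H, whose image θ(D) is fixed pointwise by φ_c for every c ∈ C. Then the set Δ*(D) = {(θ(y), y⁻¹) : y ∈ D} is a central (hence normal) subgroup of the semidirect product Ĥ ⋊_φ C, and the quotient K̂ = (Ĥ ⋊_φ C)/Δ*(D), together with the homomorphism j : Ĥ → K̂ induced by ĥ ↦ (ĥ, 1) and the homomorphism p : K̂ → K induced by (ĥ, c) ↦ π(ĥ)·c, is a central A-extension of K containing Ĥ, lifting the inclusion H → K, whose conjugation action induces φ; that is: j is injective, p is surjective, p ∘ j = (inclusion H → K) ∘ π, the kernel of p equals j(ι(A)) and is contained in the center of K̂, and x̂·j(ĥ)·x̂⁻¹ = j(φ_{p(x̂)}(ĥ))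 for all x̂ ∈ K̂ and ĥ ∈ Ĥ. -/
/-!
Because `C` is abelian, fixes `θ(D)` and acts on `Ĥ` through `D` by conjugation with `θ`, the
antidiagonal `d ↦ (θ d, d⁻¹)` embeds `D` centrally in `Ĥ ⋊ C`. The map `(ĥ, c) ↦ π(ĥ) c` kills
it, and modulo the antidiagonal every `(ĥ, d)` with `d ∈ D` becomes `(ĥ θ(d), 1)`; so the kernel of
the induced map `p` is the image of `ker π = ι(A)`, which is central since `ι(A)` is central in `Ĥ`
and fixed by `φ`. By inner-compatibility, conjugation by `(ĥ', c)` acts on `Ĥ` as `φ_{π(ĥ') c}`.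
-/

namespace SemidirectProduct

section

variable {N G : Type*} [Group N] [Group G] {ψ : G →* MulAut N}

theorem conj_inl (x : N ⋊[ψ] G) (n : N) :
    x * inl n * x⁻¹ = inl (x.left * ψ x.right n * x.left⁻¹) := by
  ext <;> simp [mul_left, inv_left]

theorem inl_mem_center {n : N} (hn : n ∈ Subgroup.center N) (hfix : ∀ g, ψ g n = n) :
    inl n ∈ Subgroup.center (N ⋊[ψ] G) := by
  rw [Subgroup.mem_center_iff] at hn ⊢
  intro x
  ext <;> simp [hfix, hn]

theorem map_mk_inl_le_center (M : Subgroup (N ⋊[ψ] G)) [M.Normal] {S : Subgroup N}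
    (hS : S ≤ Subgroup.center N) (hfix : ∀ g, ∀ n ∈ S, ψ g n = n) :
    S.map ((QuotientGroup.mk' M).comp inl) ≤ Subgroup.center ((N ⋊[ψ] G) ⧸ M) := by
  rintro _ ⟨n, hn, rfl⟩
  rw [Subgroup.mem_center_iff]
  intro z
  induction z using QuotientGroup.induction_on with
  | H z =>
    exact congrArg QuotientGroup.mk
      (Subgroup.mem_center_iff.mp (inl_mem_center (hS hn) (hfix · n hn)) z)

end

section conjugation

variable {N G K : Type*} [Group N] [Group G] [Group K] {φ : K →* MulAut N}
  (f : N →* K) (g : G →* K)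
  (hfg : ∀ c, f.comp ((φ.comp g) c).toMonoidHom = (MulAut.conj (g c)).toMonoidHom.comp f)

theorem conj_inl_eq_inl_lift (hinner : ∀ n' n, φ (f n') n = n' * n * n'⁻¹)
    (x : N ⋊[φ.comp g] G) (n : N) :
    x * inl n * x⁻¹ = inl (φ (lift f g hfg x) n) := by
  rw [conj_inl]
  congr 1
  change _ = φ (f x.left * g x.right) n
  rw [map_mul, MulAut.mul_apply, hinner]
  rfl

theorem mk_conj_mk_inl (hinner : ∀ n' n, φ (f n') n = n' * n * n'⁻¹)
    (M : Subgroup (N ⋊[φ.comp g] G)) [M.Normal] (hM : M ≤ (lift f g hfg).ker)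
    (xhat : (N ⋊[φ.comp g] G) ⧸ M) (n : N) :
    xhat * (QuotientGroup.mk' M).comp inl n * xhat⁻¹ =
      (QuotientGroup.mk' M).comp inl (φ (QuotientGroup.lift M (lift f g hfg) hM xhat) n) := by
  induction xhat using QuotientGroup.induction_on with
  | H x => exact congrArg QuotientGroup.mk (conj_inl_eq_inl_lift f g hfg hinner x n)

end conjugation

section antidiagonal

variable {N G D : Type*} [Group N] [Group G] [Group D] {ψ : G →* MulAut N}
  (θ : D →* N) (κ : D →* G)

def antidiagonal (hfix : ∀ g d, ψ g (θ d) = θ d) (hκ : ∀ d, κ d ∈ Subgroup.center G) :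
    D →* N ⋊[ψ] G where
  toFun d := ⟨θ d, (κ d)⁻¹⟩
  map_one' := by ext <;> simp
  map_mul' d₁ d₂ := by
    ext
    · change θ (d₁ * d₂) = θ d₁ * ψ (κ d₁)⁻¹ (θ d₂)
      rw [hfix, map_mul]
    · change (κ (d₁ * d₂))⁻¹ = (κ d₁)⁻¹ * (κ d₂)⁻¹
      rw [map_mul, mul_inv_rev, Subgroup.mem_center_iff.mp (inv_mem (hκ d₁))]

variable (hfix : ∀ g d, ψ g (θ d) = θ d) (hκ : ∀ d, κ d ∈ Subgroup.center G)

@[simp]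
theorem antidiagonal_apply (d : D) : antidiagonal θ κ hfix hκ d = ⟨θ d, (κ d)⁻¹⟩ := rfl

theorem antidiagonal_range_le_center (hinner : ∀ d n, ψ (κ d) n = θ d * n * (θ d)⁻¹) :
    (antidiagonal θ κ hfix hκ).range ≤ Subgroup.center (N ⋊[ψ] G) := by
  rintro _ ⟨d, rfl⟩
  rw [Subgroup.mem_center_iff]
  intro x
  ext
  · change x.left * ψ x.right (θ d) = θ d * ψ (κ d)⁻¹ x.left
    rw [hfix, ← map_inv, hinner, map_inv, inv_inv]
    group
  · exact Subgroup.mem_center_iff.mp (inv_mem (hκ d)) x.right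

theorem mk_mk_eq_mk_inl (n : N) (d : D) :
    ((⟨n, κ d⟩ : N ⋊[ψ] G) : (N ⋊[ψ] G) ⧸ (antidiagonal θ κ hfix hκ).range) =
      ((inl (n * θ d) : N ⋊[ψ] G) : (N ⋊[ψ] G) ⧸ (antidiagonal θ κ hfix hκ).range) := by
  refine QuotientGroup.eq.mpr ⟨d, ?_⟩
  ext
  · change θ d = ψ (κ d)⁻¹ n⁻¹ * ψ (κ d)⁻¹ (n * θ d)
    rw [← map_mul, inv_mul_cancel_left, hfix]
  · exact (mul_one _).symm

variable {K : Type*} [Group K] (f : N →* K) (g : G →* K)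
  (hfg : ∀ c, f.comp (ψ c).toMonoidHom = (MulAut.conj (g c)).toMonoidHom.comp f)

theorem antidiagonal_range_le_ker_lift (hθ : ∀ d, f (θ d) = g (κ d)) :
    (antidiagonal θ κ hfix hκ).range ≤ (lift f g hfg).ker := by
  rintro _ ⟨d, rfl⟩
  change f (θ d) * g (κ d)⁻¹ = 1
  rw [hθ, map_inv, mul_inv_cancel]

variable [(antidiagonal θ κ hfix hκ).range.Normal]

theorem mk_inl_injective (hκinj : Function.Injective κ) :
    Function.Injective ((QuotientGroup.mk' (antidiagonal θ κ hfix hκ).range).comp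
      (inl : N →* N ⋊[ψ] G)) := by
  rw [injective_iff_map_eq_one]
  intro n hn
  obtain ⟨d, hd⟩ := (QuotientGroup.eq_one_iff _).mp hn
  have hd1 : d = 1 := hκinj (by simpa using congrArg right hd)
  simpa [hd1] using (congrArg left hd).symm

theorem ker_quotientLift_lift (hθ : ∀ d, f (θ d) = g (κ d))
    (hD : ∀ c, g c ∈ f.range → c ∈ κ.range) :
    (QuotientGroup.lift _ (lift f g hfg)
        (antidiagonal_range_le_ker_lift θ κ hfix hκ f g hfg hθ)).ker =
      f.ker.map ((QuotientGroup.mk' _).comp inl) := by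
  refine le_antisymm (fun x hx ↦ ?_) ?_
  · induction x using QuotientGroup.induction_on with
    | H x =>
      obtain ⟨n, c⟩ := x
      have hnc : f n * g c = 1 := hx
      obtain ⟨d, rfl⟩ := hD c ⟨n⁻¹, by rw [map_inv, inv_eq_of_mul_eq_one_right hnc]⟩
      refine ⟨n * θ d, ?_, (mk_mk_eq_mk_inl θ κ hfix hκ n d).symm⟩
      change f (n * θ d) = 1
      rw [map_mul, hθ, hnc]
  · rintro _ ⟨n, hn, rfl⟩
    change f n * g 1 = 1
    rw [hn, map_one, mul_one]

end antidiagonal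

end SemidirectProduct

theorem central_extension_of_cyclic_quotient_exists_general
    (K : Type*) [Group K]
    (H : Subgroup K)
    (A : Type*) [CommGroup A]
    (Hhat : Type*) [Group Hhat]
    (ι : A →* Hhat)
    (hcent : ι.range ≤ Subgroup.center Hhat)
    (π : Hhat →* H) (hπ : Function.Surjective π)
    (hker : π.ker = ι.range)
    (φ : K →* MulAut Hhat)
    (hlift : ∀ (x : K) (h : Hhat), ((π (φ x h) : H) : K) = x * ((π h : H) : K) * x⁻¹)
    (hfixA : ∀ (x : K) (a : A), φ x (ι a) = ι a)
    (hinner : ∀ (h' h : Hhat), φ ((π h' : H) : K) h = h' * h * h'⁻¹)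
    (C : Subgroup K) (hCcyc : IsCyclic C)
    (hKHC : ∀ x : K, ∃ h ∈ H, ∃ c ∈ C, x = h * c)
    (θ : ↥(C ⊓ H) →* Hhat)
    (hθ : ∀ d : ↥(C ⊓ H), ((π (θ d) : H) : K) = (d : K))
    (hθfix : ∀ c ∈ C, ∀ d : ↥(C ⊓ H), φ c (θ d) = θ d) :
    ∃ Δ : Subgroup (Hhat ⋊[φ.comp C.subtype] C),
      (Δ : Set (Hhat ⋊[φ.comp C.subtype] C)) =
        {x | ∃ y : ↥(C ⊓ H),
          x = ⟨θ y, (Subgroup.inclusion inf_le_left y)⁻¹⟩} ∧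
      Δ ≤ Subgroup.center (Hhat ⋊[φ.comp C.subtype] C) ∧
      ∀ hN : Δ.Normal,
        haveI := hN
        ∃ p : (Hhat ⋊[φ.comp C.subtype] C) ⧸ Δ →* K,
          (∀ (h : Hhat) (c : C),
              p (QuotientGroup.mk (⟨h, c⟩ : Hhat ⋊[φ.comp C.subtype] C)) =
                ((π h : H) : K) * (c : K)) ∧
          Function.Injective ((QuotientGroup.mk' Δ).comp SemidirectProduct.inl) ∧
          Function.Surjective p ∧
          (∀ h : Hhat,
              p ((QuotientGroup.mk' Δ).comp SemidirectProduct.inl h) = ((π h : H) : K)) ∧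
          p.ker = Subgroup.map ((QuotientGroup.mk' Δ).comp SemidirectProduct.inl) ι.range ∧
          p.ker ≤ Subgroup.center ((Hhat ⋊[φ.comp C.subtype] C) ⧸ Δ) ∧
          (∀ (xhat : (Hhat ⋊[φ.comp C.subtype] C) ⧸ Δ) (h : Hhat),
              xhat * (QuotientGroup.mk' Δ).comp SemidirectProduct.inl h * xhat⁻¹ =
                (QuotientGroup.mk' Δ).comp SemidirectProduct.inl (φ (p xhat) h)) := by
  set κ : ↥(C ⊓ H) →* C := Subgroup.inclusion inf_le_left
  have hκ : ∀ d, κ d ∈ Subgroup.center C := by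
    have := hCcyc
    simp [Subgroup.center_eq_top]
  have hfix : ∀ (c : C) d, φ.comp C.subtype c (θ d) = θ d := fun c ↦ hθfix c c.2
  have hinnerD : ∀ d n, φ.comp C.subtype (κ d) n = θ d * n * (θ d)⁻¹ := fun d n ↦ by
    rw [← hinner, hθ]
    rfl
  have hcond : ∀ c : C, (H.subtype.comp π).comp (φ.comp C.subtype c).toMonoidHom =
      (MulAut.conj (C.subtype c)).toMonoidHom.comp (H.subtype.comp π) :=
    fun c ↦ MonoidHom.ext (hlift c)
  have hD : ∀ c : C, C.subtype c ∈ (H.subtype.comp π).range → c ∈ κ.range := by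
    rintro c ⟨n, hn⟩
    have hcH : (c : K) ∈ H := (show ((π n : H) : K) = c from hn) ▸ (π n).2
    exact ⟨⟨c, c.2, hcH⟩, rfl⟩
  refine ⟨(SemidirectProduct.antidiagonal θ κ hfix hκ).range, ?_,
    SemidirectProduct.antidiagonal_range_le_center θ κ hfix hκ hinnerD, fun _ ↦ ?_⟩
  · ext x
    simp [eq_comm, κ]
  have hkerp := SemidirectProduct.ker_quotientLift_lift θ κ hfix hκ _ _ hcond hθ hD
  rw [MonoidHom.ker_comp_of_injective _ _ H.subtype_injective, hker] at hkerp
  refine ⟨_, fun _ _ ↦ rfl,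
    SemidirectProduct.mk_inl_injective θ κ hfix hκ (Subgroup.inclusion_injective _), ?_,
    fun _ ↦ by simp, hkerp,
    hkerp ▸ SemidirectProduct.map_mk_inl_le_center _ hcent
      (by rintro x _ ⟨a, rfl⟩; exact hfixA x a),
    SemidirectProduct.mk_conj_mk_inl _ _ hcond hinner _ _⟩
  intro x
  obtain ⟨h, hh, c, hc, rfl⟩ := hKHC x
  obtain ⟨n, hn⟩ := hπ ⟨h, hh⟩
  exact ⟨QuotientGroup.mk ⟨n, ⟨c, hc⟩⟩, by simp [hn]⟩

/-- Existence part of Lemma 4.10: construction of the central `A`-extension `K̂` of `K`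
containing `Hhat` as the quotient of the semidirect product `Hhat ⋊ C` by the central
"inverse diagonal" subgroup `Δ*(D)`. -/
theorem central_extension_of_cyclic_quotient_exists
    (K : Type*) [Group K] [Finite K]
    (H : Subgroup K) [H.Normal] (hcyc : IsCyclic (K ⧸ H))
    (A : Type*) [CommGroup A]
    (hdiv : ∀ (a : A) (n : ℕ), 0 < n → ∃ b : A, b ^ n = a)
    (Hhat : Type*) [Group Hhat]
    (ι : A →* Hhat) (hι : Function.Injective ι)
    (hcent : ι.range ≤ Subgroup.center Hhat)
    (π : Hhat →* H) (hπ : Function.Surjective π)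
    (hker : π.ker = ι.range)
    (φ : K →* MulAut Hhat)
    (hlift : ∀ (x : K) (h : Hhat), ((π (φ x h) : H) : K) = x * ((π h : H) : K) * x⁻¹)
    (hfixA : ∀ (x : K) (a : A), φ x (ι a) = ι a)
    (hinner : ∀ (h' h : Hhat), φ ((π h' : H) : K) h = h' * h * h'⁻¹)
    (C : Subgroup K) (hCcyc : IsCyclic C)
    (hKHC : ∀ x : K, ∃ h ∈ H, ∃ c ∈ C, x = h * c)
    (θ : ↥(C ⊓ H) →* Hhat)
    (hθ : ∀ d : ↥(C ⊓ H), ((π (θ d) : H) : K) = (d : K))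
    (hθfix : ∀ c ∈ C, ∀ d : ↥(C ⊓ H), φ c (θ d) = θ d) :
    ∃ Δ : Subgroup (Hhat ⋊[φ.comp C.subtype] C),
      (Δ : Set (Hhat ⋊[φ.comp C.subtype] C)) =
        {x | ∃ y : ↥(C ⊓ H),
          x = ⟨θ y, (Subgroup.inclusion inf_le_left y)⁻¹⟩} ∧
      Δ ≤ Subgroup.center (Hhat ⋊[φ.comp C.subtype] C) ∧
      ∀ hN : Δ.Normal,
        haveI := hN
        ∃ p : (Hhat ⋊[φ.comp C.subtype] C) ⧸ Δ →* K,
          (∀ (h : Hhat) (c : C),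
              p (QuotientGroup.mk (⟨h, c⟩ : Hhat ⋊[φ.comp C.subtype] C)) =
                ((π h : H) : K) * (c : K)) ∧
          Function.Injective ((QuotientGroup.mk' Δ).comp SemidirectProduct.inl) ∧
          Function.Surjective p ∧
          (∀ h : Hhat,
              p ((QuotientGroup.mk' Δ).comp SemidirectProduct.inl h) = ((π h : H) : K)) ∧
          p.ker = Subgroup.map ((QuotientGroup.mk' Δ).comp SemidirectProduct.inl) ι.range ∧
          p.ker ≤ Subgroup.center ((Hhat ⋊[φ.comp C.subtype] C) ⧸ Δ) ∧
          (∀ (xhat : (Hhat ⋊[φ.comp C.subtype] C) ⧸ Δ) (h : Hhat),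
              xhat * (QuotientGroup.mk' Δ).comp SemidirectProduct.inl h * xhat⁻¹ =
                (QuotientGroup.mk' Δ).comp SemidirectProduct.inl (φ (p xhat) h)) :=
  central_extension_of_cyclic_quotient_exists_general K H A Hhat ι hcent π hπ hker φ hlift hfixA
    hinner C hCcyc hKHC θ hθ hθfix
end

section
/- Let K be a finite group, H a normal subgroup of K such that K/H is cyclic, and A a divisible abelian group. Let (Ĥ, ι, π) be a central A-extension of H and let φ : K → Aut(Ĥ) be an action of K on Ĥ that lifts the conjugation action of K on H, fixes A pointwise, and is inner-compatible. Suppose (K̂, j, p) and (K̂', j', p') are both central A-extensions of K containing Ĥ, lifting the inclusion H → K, whose conjugation action induces φ. Then there exists a group isomorphism ψ : K̂ → K̂' such that ψ ∘ j = j' and p' ∘ ψ = p. -/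
/-!
Pick `g ∈ K` whose image generates `K ⧸ H`, let `n` be the order of that image and `x ∈ K̂` a lift
of `g`; then `x ^ n = j h₀` for some `h₀ ∈ Ĥ`. As `ker p'` is central and divisible, a lift of `g`
to `K̂'` can be corrected by an `n`-th root in `ker p'` to a lift `x'` with `x' ^ n = j' h₀`.
Now `(h, m) ↦ j h * x ^ m` and `(h, m) ↦ j' h * x' ^ m` are surjections from `Ĥ ⋊ ℤ` (with `ℤ`
acting through `φ g`), and both have kernel `{(h, n q) | h * h₀ ^ q = 1}`.
-/

open Function

noncomputable def MulEquiv.ofSurjectiveOfKerEq {S G G' : Type*} [Group S] [Group G] [Group G']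
    {f : S →* G} {f' : S →* G'} (hf : Surjective f) (hf' : Surjective f') (hker : f.ker = f'.ker) :
    G ≃* G' :=
  (QuotientGroup.quotientKerEquivOfSurjective f hf).symm.trans
    ((QuotientGroup.quotientMulEquivOfEq hker).trans
      (QuotientGroup.quotientKerEquivOfSurjective f' hf'))

@[simp]
theorem MulEquiv.ofSurjectiveOfKerEq_apply {S G G' : Type*} [Group S] [Group G] [Group G']
    {f : S →* G} {f' : S →* G'} (hf : Surjective f) (hf' : Surjective f') (hker : f.ker = f'.ker)
    (s : S) : ofSurjectiveOfKerEq hf hf' hker (f s) = f' s := by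
  have hs : (QuotientGroup.quotientKerEquivOfSurjective f hf).symm (f s) = (s : S ⧸ f.ker) :=
    (MulEquiv.symm_apply_eq _).2 rfl
  simp only [ofSurjectiveOfKerEq, MulEquiv.trans_apply, hs]
  rfl

section

variable {N G K : Type*} [Group N] [Group G] [Group K] {H : Subgroup K} {π : N →* H}
  {j : N →* G} {p : G →* K}

theorem mem_range_of_map_mem (hπ : Surjective π) (hpj : ∀ h, p (j h) = π h)
    (hker : p.ker ≤ j.range) {y : G} (hy : p y ∈ H) : y ∈ j.range := by
  obtain ⟨h₁, hh₁⟩ := hπ ⟨p y, hy⟩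
  obtain ⟨h₂, hh₂⟩ := hker (show y * (j h₁)⁻¹ ∈ p.ker by simp [hpj, hh₁])
  exact ⟨h₂ * h₁, by simp [hh₂]⟩

theorem exists_map_eq_and_pow_eq (hp : Surjective p) (hcent : p.ker ≤ Subgroup.center G) {n : ℕ}
    (hdiv : ∀ w ∈ p.ker, ∃ z ∈ p.ker, z ^ n = w) {g : K} {y : G} (hy : p y = g ^ n) :
    ∃ x, p x = g ∧ x ^ n = y := by
  obtain ⟨x₀, rfl⟩ := hp g
  obtain ⟨z, hz, hzn⟩ := hdiv ((x₀ ^ n)⁻¹ * y) (by simp [hy])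
  refine ⟨x₀ * z, by simp [p.mem_ker.1 hz], ?_⟩
  have hcomm : Commute x₀ z := Subgroup.mem_center_iff.1 (hcent hz) x₀
  rw [hcomm.mul_pow, hzn, mul_inv_cancel_left]

variable (φ : K →* MulAut N) (hconj : ∀ y h, y * j h * y⁻¹ = j (φ (p y) h))

def liftZPowers {g : K} {x : G} (hx : p x = g) :
    N ⋊[φ.comp (zpowersHom K g)] Multiplicative ℤ →* G :=
  SemidirectProduct.lift j (zpowersHom G x) fun m ↦ by
    ext h
    simp only [MonoidHom.comp_apply, zpowersHom_apply, MulEquiv.coe_toMonoidHom,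
      MulAut.conj_apply]
    rw [hconj, map_zpow p, hx, map_zpow φ]

@[simp]
theorem liftZPowers_apply {g : K} {x : G} (hx : p x = g)
    (s : N ⋊[φ.comp (zpowersHom K g)] Multiplicative ℤ) :
    liftZPowers φ hconj hx s = j s.left * x ^ s.right.toAdd :=
  rfl

theorem map_liftZPowers (hpj : ∀ h, p (j h) = π h) {g : K} {x : G} (hx : p x = g)
    (s : N ⋊[φ.comp (zpowersHom K g)] Multiplicative ℤ) :
    p (liftZPowers φ hconj hx s) = π s.left * g ^ s.right.toAdd := by
  simp [hpj, hx]

variable [H.Normal]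

theorem mul_zpow_eq_one_iff (hj : Injective j) (hpj : ∀ h, p (j h) = π h) {x : G} {h₀ : N}
    (hx : x ^ orderOf (p x : K ⧸ H) = j h₀) (h : N) (m : ℤ) :
    j h * x ^ m = 1 ↔ ∃ q : ℤ, m = orderOf (p x : K ⧸ H) * q ∧ h * h₀ ^ q = 1 := by
  constructor
  · intro e
    have hm : (p x : K ⧸ H) ^ m = 1 := by
      have hjH : (p (j h) : K ⧸ H) = 1 := (QuotientGroup.eq_one_iff _).2 (hpj h ▸ (π h).2)
      simpa [hjH] using congrArg (fun y ↦ (p y : K ⧸ H)) e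
    obtain ⟨q, rfl⟩ := orderOf_dvd_iff_zpow_eq_one.2 hm
    refine ⟨q, rfl, hj ?_⟩
    rwa [map_mul, map_zpow, ← hx, ← zpow_natCast, ← zpow_mul, map_one]
  · rintro ⟨q, rfl, e⟩
    rw [zpow_mul, zpow_natCast, hx, ← map_zpow, ← map_mul, e, map_one]

theorem exists_eq_mul_zpow (hπ : Surjective π) (hpj : ∀ h, p (j h) = π h)
    (hker : p.ker ≤ j.range) {x : G} (hgen : ∀ z : K ⧸ H, z ∈ Subgroup.zpowers (p x : K ⧸ H))
    (y : G) : ∃ (h : N) (m : ℤ), j h * x ^ m = y := by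
  obtain ⟨m, hm⟩ := Subgroup.mem_zpowers_iff.1 (hgen (p y))
  obtain ⟨h, hh⟩ := mem_range_of_map_mem hπ hpj hker (y := y * x ^ (-m))
    (by rw [← QuotientGroup.eq_one_iff]; simp [← hm])
  exact ⟨h, m, by simp [hh]⟩

theorem liftZPowers_surjective (hπ : Surjective π) (hpj : ∀ h, p (j h) = π h)
    (hker : p.ker ≤ j.range) {g : K} (hgen : ∀ z : K ⧸ H, z ∈ Subgroup.zpowers (g : K ⧸ H))
    {x : G} (hx : p x = g) : Surjective (liftZPowers φ hconj hx) := by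
  intro y
  obtain ⟨h, m, rfl⟩ := exists_eq_mul_zpow hπ hpj hker (hx ▸ hgen) y
  exact ⟨⟨h, .ofAdd m⟩, rfl⟩

theorem mem_ker_liftZPowers_iff (hj : Injective j) (hpj : ∀ h, p (j h) = π h)
    {g : K} {x : G} (hx : p x = g) {h₀ : N} (hh₀ : x ^ orderOf (g : K ⧸ H) = j h₀)
    (s : N ⋊[φ.comp (zpowersHom K g)] Multiplicative ℤ) :
    s ∈ (liftZPowers φ hconj hx).ker ↔
      ∃ q : ℤ, s.right.toAdd = orderOf (g : K ⧸ H) * q ∧ s.left * h₀ ^ q = 1 := by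
  subst hx
  exact mul_zpow_eq_one_iff hj hpj hh₀ s.left s.right.toAdd

end

theorem central_extension_of_cyclic_quotient_unique_general
    (K : Type*) [Group K] [Finite K]
    (H : Subgroup K) [H.Normal] (hcyc : IsCyclic (K ⧸ H))
    (A : Type*) [CommGroup A]
    (hdiv : ∀ (a : A) (n : ℕ), 0 < n → ∃ b : A, b ^ n = a)
    (Hhat : Type*) [Group Hhat]
    (ι : A →* Hhat)
    (π : Hhat →* H) (hπ : Function.Surjective π)
    (φ : K →* MulAut Hhat)
    (Khat : Type*) [Group Khat] (j : Hhat →* Khat) (p : Khat →* K)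
    (hj : Function.Injective j) (hp : Function.Surjective p)
    (hpj : ∀ h : Hhat, p (j h) = ((π h : H) : K))
    (hpker : p.ker = Subgroup.map j ι.range)
    (hconj : ∀ (xhat : Khat) (h : Hhat), xhat * j h * xhat⁻¹ = j (φ (p xhat) h))
    (Khat' : Type*) [Group Khat'] (j' : Hhat →* Khat') (p' : Khat' →* K)
    (hj' : Function.Injective j') (hp' : Function.Surjective p')
    (hpj' : ∀ h : Hhat, p' (j' h) = ((π h : H) : K))
    (hpker' : p'.ker = Subgroup.map j' ι.range)
    (hpcent' : p'.ker ≤ Subgroup.center Khat')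
    (hconj' : ∀ (xhat : Khat') (h : Hhat), xhat * j' h * xhat⁻¹ = j' (φ (p' xhat) h)) :
    ∃ ψ : Khat ≃* Khat',
      (∀ h : Hhat, ψ (j h) = j' h) ∧ (∀ xhat : Khat, p' (ψ xhat) = p xhat) := by
  obtain ⟨c, hc⟩ := hcyc.exists_generator
  obtain ⟨g, rfl⟩ := QuotientGroup.mk_surjective c
  set n := orderOf (g : K ⧸ H)
  have hker : p.ker ≤ j.range := hpker ▸ Subgroup.map_le_range j _
  have hker' : p'.ker ≤ j'.range := hpker' ▸ Subgroup.map_le_range j' _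
  obtain ⟨x, hx⟩ := hp g
  obtain ⟨h₀, hh₀⟩ := mem_range_of_map_mem hπ hpj hker (y := x ^ n)
    (by rw [← QuotientGroup.eq_one_iff]; simp [hx, n, pow_orderOf_eq_one])
  have hker_div' : ∀ w ∈ p'.ker, ∃ z ∈ p'.ker, z ^ n = w := by
    rw [hpker']
    rintro _ ⟨_, ⟨a, rfl⟩, rfl⟩
    obtain ⟨b, rfl⟩ := hdiv a n (orderOf_pos _)
    exact ⟨j' (ι b), Subgroup.mem_map_of_mem _ ⟨b, rfl⟩, by simp⟩
  obtain ⟨x', hx', hx'n⟩ := exists_map_eq_and_pow_eq hp' hpcent' hker_div' (y := j' h₀)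
    (by rw [hpj', ← hpj, hh₀, map_pow, hx])
  have hL := liftZPowers_surjective φ hconj hπ hpj hker hc hx
  have hL' := liftZPowers_surjective φ hconj' hπ hpj' hker' hc hx'
  have hker_eq : (liftZPowers φ hconj hx).ker = (liftZPowers φ hconj' hx').ker := by
    ext s
    rw [mem_ker_liftZPowers_iff φ hconj hj hpj hx hh₀.symm,
      mem_ker_liftZPowers_iff φ hconj' hj' hpj' hx' hx'n]
  refine ⟨MulEquiv.ofSurjectiveOfKerEq hL hL' hker_eq, fun h ↦ ?_, fun y ↦ ?_⟩
  · simpa using MulEquiv.ofSurjectiveOfKerEq_apply hL hL' hker_eq (SemidirectProduct.inl h)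
  · obtain ⟨s, rfl⟩ := hL y
    rw [MulEquiv.ofSurjectiveOfKerEq_apply, map_liftZPowers φ hconj hpj,
      map_liftZPowers φ hconj' hpj']

/-- Essential uniqueness part of Lemma 4.10: two central `A`-extensions of `K` containing
`Ĥ`, lifting the inclusion `H → K` and whose conjugation action induces `φ`, are isomorphic
compatibly with `j`, `j'`, `p`, `p'`. -/
theorem central_extension_of_cyclic_quotient_unique
    (K : Type*) [Group K] [Finite K]
    (H : Subgroup K) [H.Normal] (hcyc : IsCyclic (K ⧸ H))
    (A : Type*) [CommGroup A]
    (hdiv : ∀ (a : A) (n : ℕ), 0 < n → ∃ b : A, b ^ n = a)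
    (Hhat : Type*) [Group Hhat]
    (ι : A →* Hhat) (hι : Function.Injective ι)
    (hcent : ι.range ≤ Subgroup.center Hhat)
    (π : Hhat →* H) (hπ : Function.Surjective π)
    (hker : π.ker = ι.range)
    (φ : K →* MulAut Hhat)
    (hlift : ∀ (x : K) (h : Hhat), ((π (φ x h) : H) : K) = x * ((π h : H) : K) * x⁻¹)
    (hfixA : ∀ (x : K) (a : A), φ x (ι a) = ι a)
    (hinner : ∀ (h' h : Hhat), φ ((π h' : H) : K) h = h' * h * h'⁻¹)
    (Khat : Type*) [Group Khat] (j : Hhat →* Khat) (p : Khat →* K)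
    (hj : Function.Injective j) (hp : Function.Surjective p)
    (hpj : ∀ h : Hhat, p (j h) = ((π h : H) : K))
    (hpker : p.ker = Subgroup.map j ι.range)
    (hpcent : p.ker ≤ Subgroup.center Khat)
    (hconj : ∀ (xhat : Khat) (h : Hhat), xhat * j h * xhat⁻¹ = j (φ (p xhat) h))
    (Khat' : Type*) [Group Khat'] (j' : Hhat →* Khat') (p' : Khat' →* K)
    (hj' : Function.Injective j') (hp' : Function.Surjective p')
    (hpj' : ∀ h : Hhat, p' (j' h) = ((π h : H) : K))
    (hpker' : p'.ker = Subgroup.map j' ι.range)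
    (hpcent' : p'.ker ≤ Subgroup.center Khat')
    (hconj' : ∀ (xhat : Khat') (h : Hhat), xhat * j' h * xhat⁻¹ = j' (φ (p' xhat) h)) :
    ∃ ψ : Khat ≃* Khat',
      (∀ h : Hhat, ψ (j h) = j' h) ∧ (∀ xhat : Khat, p' (ψ xhat) = p xhat) :=
  central_extension_of_cyclic_quotient_unique_general K H hcyc A hdiv Hhat ι π hπ φ Khat j p hj hp
    hpj hpker hconj Khat' j' p' hj' hp' hpj' hpker' hpcent' hconj'
end

section
/- Let K be a finite group, H a normal subgroup of K such that K/H is cyclic, and A a divisible abelian group. Let (Ĥ, ι, π) be a central A-extension of H, let φ : K → Aut(Ĥ) be an action of K on Ĥ that lifts the conjugation action of K on H, fixes A pointwise, and is inner-compatible, and let (K̂, j, p) be a central A-extension of K containing Ĥ, lifting the inclusion H → K, whose conjugation action induces φ. Let τ be an automorphism of K with τ(H) = H, and let σ̂ be an automorphism of Ĥ such that π(σ̂(ĥ)) = τ(π(ĥ)) for all ĥ ∈ Ĥ, σ̂ fixes ι(A) pointwise, and σ̂(φ_x(ĥ)) = φ_{τ(x)}(σ̂(ĥ)) for all x ∈ K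 and ĥ ∈ Ĥ. Then there exists an automorphism τ̂ of K̂ such that τ̂ ∘ j = j ∘ σ̂ and p ∘ τ̂ = τ ∘ p. -/
/-! `K̂` is generated by `j(Ĥ)` and a lift `u` of a generator `t` of `K/H`, so it is a quotient of
`Ĥ ⋊ ℤ` (with `ℤ` acting through `φ(t)`) by `(h, k) ↦ j h * u ^ k`, and the kernel of this map
only depends on `n = ord(tH)` and on `h₀ = j⁻¹(uⁿ)`. Twisting `(j, p)` to `(j ∘ σ̂, τ⁻¹ ∘ p)` gives a
second extension of the same kind on `K̂`; by divisibility of `A` its lift of `t` can be corrected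
by a central element so that its `n`-th power is again `h₀`. The two quotient maps then have the
same kernel, and the isomorphism between them is `τ̂`. -/

open Function Multiplicative

theorem MonoidHom.exists_mulEquiv_apply_eq_of_ker_eq {P G G' : Type*} [Group P] [Group G]
    [Group G'] {f : P →* G} {g : P →* G'} (hf : Surjective f) (hg : Surjective g)
    (hker : f.ker = g.ker) : ∃ e : G ≃* G', ∀ x, e (f x) = g x := by
  refine ⟨(QuotientGroup.quotientKerEquivOfSurjective f hf).symm.trans
    ((QuotientGroup.quotientMulEquivOfEq hker).trans
      (QuotientGroup.quotientKerEquivOfSurjective g hg)), fun x => ?_⟩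
  have : (QuotientGroup.quotientKerEquivOfSurjective f hf).symm (f x) = x :=
    (MulEquiv.symm_apply_eq _).mpr rfl
  rw [MulEquiv.trans_apply, this]
  rfl

theorem Subgroup.zpow_mem_iff_orderOf_dvd {K : Type*} [Group K] (H : Subgroup K) [H.Normal]
    (t : K) (k : ℤ) : t ^ k ∈ H ↔ (orderOf (t : K ⧸ H) : ℤ) ∣ k := by
  rw [← QuotientGroup.eq_one_iff, QuotientGroup.mk_zpow, orderOf_dvd_iff_zpow_eq_one]

section

variable {K Hhat G G' : Type*} [Group K] [Group Hhat] [Group G] [Group G'] {H : Subgroup K}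

structure IsCompatibleExtension (φ : K →* MulAut Hhat) (π : Hhat →* H) (j : Hhat →* G)
    (p : G →* K) : Prop where
  injective : Injective j
  map_apply : ∀ h, p (j h) = π h
  comap_le_range : H.comap p ≤ j.range
  ker_le_center : p.ker ≤ Subgroup.center G
  conj_apply : ∀ g h, g * j h * g⁻¹ = j (φ (p g) h)

theorem comap_le_range_of_ker_le_range {π : Hhat →* H} {j : Hhat →* G} {p : G →* K}
    (hπ : Surjective π) (hpj : ∀ h, p (j h) = π h) (hker : p.ker ≤ j.range) :
    H.comap p ≤ j.range := by
  intro x hx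
  obtain ⟨h, hh⟩ := hπ ⟨p x, hx⟩
  have hx' : x * (j h)⁻¹ ∈ j.range := hker (by simp [hpj, hh])
  simpa using mul_mem hx' (MonoidHom.mem_range.mpr ⟨h, rfl⟩)

namespace IsCompatibleExtension

variable {φ : K →* MulAut Hhat} {π : Hhat →* H} {j : Hhat →* G} {p : G →* K}

theorem twist (hE : IsCompatibleExtension φ π j p) (τ : MulAut K)
    (hτH : H.map τ.toMonoidHom ≤ H) (σ : MulAut Hhat)
    (hσπ : ∀ h, ((π (σ h) : H) : K) = τ (π h)) (hσφ : ∀ x h, σ (φ x h) = φ (τ x) (σ h)) :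
    IsCompatibleExtension φ π (j.comp σ.toMonoidHom) (τ.symm.toMonoidHom.comp p) where
  injective := hE.injective.comp σ.injective
  map_apply h := by simp [hE.map_apply, hσπ]
  comap_le_range x hx := by
    obtain ⟨h, hh⟩ := hE.comap_le_range (hτH ⟨_, hx, τ.apply_symm_apply (p x)⟩)
    exact ⟨σ.symm h, by simpa using hh⟩
  ker_le_center x hx := hE.ker_le_center (by simpa using hx)
  conj_apply g h := by simp [hE.conj_apply, hσφ]

theorem exists_lift_pow_eq (hE : IsCompatibleExtension φ π j p) (hp : Surjective p) {n : ℕ}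
    (hdiv : ∀ a ∈ π.ker, ∃ b ∈ π.ker, b ^ n = a) {t : K} {h₀ : Hhat}
    (hh₀ : ((π h₀ : H) : K) = t ^ n) : ∃ u, p u = t ∧ u ^ n = j h₀ := by
  obtain ⟨u, rfl⟩ := hp t
  obtain ⟨h₁, hh₁⟩ : u ^ n ∈ j.range := hE.comap_le_range (by simp [← hh₀])
  have hπ : π h₁ = π h₀ := Subtype.ext (by rw [← hE.map_apply, hh₁, hh₀, map_pow])
  obtain ⟨b, hb, hbn⟩ := hdiv (h₁⁻¹ * h₀) (by simp [MonoidHom.mem_ker, hπ])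
  have hjb : j b ∈ p.ker := by
    rw [MonoidHom.mem_ker, hE.map_apply, MonoidHom.mem_ker.mp hb, OneMemClass.coe_one]
  refine ⟨u * j b, by simpa using hjb, ?_⟩
  rw [Commute.mul_pow (Subgroup.mem_center_iff.mp (hE.ker_le_center hjb) u), ← hh₁, ← map_pow,
    hbn, ← map_mul, mul_inv_cancel_left]

def semidirectLift (hE : IsCompatibleExtension φ π j p) {t : K} (u : G) (hu : p u = t) :
    Hhat ⋊[φ.comp (zpowersHom K t)] Multiplicative ℤ →* G :=
  SemidirectProduct.lift j (zpowersHom G u) fun k => by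
    ext h
    simp only [MonoidHom.comp_apply, zpowersHom_apply, MulEquiv.coe_toMonoidHom]
    rw [MulAut.conj_apply, hE.conj_apply, map_zpow p, hu]

theorem semidirectLift_apply (hE : IsCompatibleExtension φ π j p) {t : K} (u : G) (hu : p u = t)
    (x : Hhat ⋊[φ.comp (zpowersHom K t)] Multiplicative ℤ) :
    hE.semidirectLift u hu x = j x.left * u ^ x.right.toAdd :=
  rfl

theorem map_semidirectLift (hE : IsCompatibleExtension φ π j p) {t : K} (u : G) (hu : p u = t)
    (x : Hhat ⋊[φ.comp (zpowersHom K t)] Multiplicative ℤ) :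
    p (hE.semidirectLift u hu x) = π x.left * t ^ x.right.toAdd := by
  rw [semidirectLift_apply, map_mul, map_zpow, hE.map_apply, hu]

theorem semidirectLift_surjective (hE : IsCompatibleExtension φ π j p) [H.Normal] {t : K}
    (hgen : ∀ y : K ⧸ H, y ∈ Subgroup.zpowers (t : K ⧸ H)) (u : G) (hu : p u = t) :
    Surjective (hE.semidirectLift u hu) := by
  intro g
  obtain ⟨m, hm⟩ := Subgroup.mem_zpowers_iff.mp (hgen (p g))
  obtain ⟨h, hh⟩ : g * u ^ (-m) ∈ j.range := hE.comap_le_range (by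
    rw [Subgroup.mem_comap, ← QuotientGroup.eq_one_iff, map_mul, map_zpow, hu,
      QuotientGroup.mk_mul, QuotientGroup.mk_zpow, ← hm, zpow_neg, mul_inv_cancel])
  exact ⟨⟨h, ofAdd m⟩, by simp [semidirectLift_apply, hh]⟩

theorem semidirectLift_eq_one_iff (hE : IsCompatibleExtension φ π j p) [H.Normal] {t : K} {u : G}
    (hu : p u = t) {h₀ : Hhat} (hun : u ^ orderOf (t : K ⧸ H) = j h₀)
    (x : Hhat ⋊[φ.comp (zpowersHom K t)] Multiplicative ℤ) :
    hE.semidirectLift u hu x = 1 ↔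
      ∃ q : ℤ, x.right.toAdd = orderOf (t : K ⧸ H) * q ∧ x.left * h₀ ^ q = 1 := by
  have hpow (q : ℤ) : u ^ ((orderOf (t : K ⧸ H) : ℤ) * q) = j (h₀ ^ q) := by
    rw [zpow_mul, zpow_natCast, hun, map_zpow]
  rw [semidirectLift_apply]
  constructor
  · intro h1
    have hmem : t ^ x.right.toAdd ∈ H := by
      have hp1 := hE.map_semidirectLift u hu x
      rw [semidirectLift_apply, h1, map_one] at hp1
      rw [eq_inv_of_mul_eq_one_right hp1.symm]
      exact inv_mem (π _).2
    obtain ⟨q, hq⟩ := (H.zpow_mem_iff_orderOf_dvd t _).mp hmem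
    refine ⟨q, hq, hE.injective ?_⟩
    rw [map_mul, ← hpow, ← hq, h1, map_one]
  · rintro ⟨q, hq, h1⟩
    rw [hq, hpow, ← map_mul, h1, map_one]

theorem exists_mulEquiv {j' : Hhat →* G'} {p' : G' →* K} (hE : IsCompatibleExtension φ π j p)
    (hE' : IsCompatibleExtension φ π j' p') [H.Normal] {t : K}
    (hgen : ∀ y : K ⧸ H, y ∈ Subgroup.zpowers (t : K ⧸ H)) {u : G} {u' : G'} (hu : p u = t)
    (hu' : p' u' = t) {h₀ : Hhat} (hun : u ^ orderOf (t : K ⧸ H) = j h₀)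
    (hun' : u' ^ orderOf (t : K ⧸ H) = j' h₀) :
    ∃ e : G ≃* G', (∀ h, e (j h) = j' h) ∧ ∀ g, p' (e g) = p g := by
  obtain ⟨e, he⟩ := MonoidHom.exists_mulEquiv_apply_eq_of_ker_eq
    (hE.semidirectLift_surjective hgen u hu) (hE'.semidirectLift_surjective hgen u' hu') (by
      ext x
      simp only [MonoidHom.mem_ker, hE.semidirectLift_eq_one_iff hu hun,
        hE'.semidirectLift_eq_one_iff hu' hun'])
  refine ⟨e, fun h => by simpa [semidirectLift_apply] using he (SemidirectProduct.inl h),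
    fun g => ?_⟩
  obtain ⟨x, rfl⟩ := hE.semidirectLift_surjective hgen u hu g
  rw [he, map_semidirectLift, map_semidirectLift]

end IsCompatibleExtension

end

theorem central_extension_lift_automorphism_general
    (K : Type*) [Group K] [Finite K]
    (H : Subgroup K) [H.Normal] (hcyc : IsCyclic (K ⧸ H))
    (A : Type*) [CommGroup A]
    (hdiv : ∀ (a : A) (n : ℕ), 0 < n → ∃ b : A, b ^ n = a)
    (Hhat : Type*) [Group Hhat]
    (ι : A →* Hhat)
    (π : Hhat →* H) (hπ : Function.Surjective π)
    (hker : π.ker = ι.range)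
    (φ : K →* MulAut Hhat)
    (Khat : Type*) [Group Khat] (j : Hhat →* Khat) (p : Khat →* K)
    (hj : Function.Injective j) (hp : Function.Surjective p)
    (hpj : ∀ h : Hhat, p (j h) = ((π h : H) : K))
    (hpker : p.ker = Subgroup.map j ι.range)
    (hpcent : p.ker ≤ Subgroup.center Khat)
    (hconj : ∀ (xhat : Khat) (h : Hhat), xhat * j h * xhat⁻¹ = j (φ (p xhat) h))
    (τ : MulAut K) (hτH : H.map τ.toMonoidHom = H)
    (σhat : MulAut Hhat)
    (hσπ : ∀ h : Hhat, ((π (σhat h) : H) : K) = τ ((π h : H) : K))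
    (hσφ : ∀ (x : K) (h : Hhat), σhat (φ x h) = φ (τ x) (σhat h)) :
    ∃ τhat : MulAut Khat,
      (∀ h : Hhat, τhat (j h) = j (σhat h)) ∧
      (∀ xhat : Khat, p (τhat xhat) = τ (p xhat)) := by
  obtain ⟨g, hgen⟩ := hcyc.exists_generator
  obtain ⟨t, rfl⟩ := QuotientGroup.mk_surjective g
  set n := orderOf (t : K ⧸ H)
  have hE : IsCompatibleExtension φ π j p :=
    ⟨hj, hpj, comap_le_range_of_ker_le_range hπ hpj (hpker ▸ Subgroup.map_le_range j _),
      hpcent, hconj⟩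
  have hE' := hE.twist τ hτH.le σhat hσπ hσφ
  have hdivπ : ∀ a ∈ π.ker, ∃ b ∈ π.ker, b ^ n = a := by
    intro _ ha
    obtain ⟨a, rfl⟩ := hker ▸ ha
    obtain ⟨b, rfl⟩ := hdiv a n (orderOf_pos _)
    exact ⟨ι b, hker ▸ ⟨b, rfl⟩, (map_pow ι b n).symm⟩
  obtain ⟨h₀, hh₀⟩ := hπ ⟨t ^ n, by
    rw [← QuotientGroup.eq_one_iff, QuotientGroup.mk_pow, pow_orderOf_eq_one]⟩
  obtain ⟨u, hu, hun⟩ := hE.exists_lift_pow_eq hp hdivπ (congrArg Subtype.val hh₀)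
  obtain ⟨u', hu', hun'⟩ :=
    hE'.exists_lift_pow_eq (τ.symm.surjective.comp hp) hdivπ (congrArg Subtype.val hh₀)
  obtain ⟨τhat, hτj, hτp⟩ := hE.exists_mulEquiv hE' hgen hu hu' hun hun'
  exact ⟨τhat, hτj, fun x => by simpa using congrArg τ (hτp x)⟩

/-- Final assertion of Lemma 4.10: an automorphism `τ` of `K` stabilizing `H` which lifts
equivariantly to an automorphism `σ̂` of `Ĥ` lifts to an automorphism of `K̂` extending `σ̂`. -/
theorem central_extension_lift_automorphism
    (K : Type*) [Group K] [Finite K]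
    (H : Subgroup K) [H.Normal] (hcyc : IsCyclic (K ⧸ H))
    (A : Type*) [CommGroup A]
    (hdiv : ∀ (a : A) (n : ℕ), 0 < n → ∃ b : A, b ^ n = a)
    (Hhat : Type*) [Group Hhat]
    (ι : A →* Hhat) (hι : Function.Injective ι)
    (hcent : ι.range ≤ Subgroup.center Hhat)
    (π : Hhat →* H) (hπ : Function.Surjective π)
    (hker : π.ker = ι.range)
    (φ : K →* MulAut Hhat)
    (hlift : ∀ (x : K) (h : Hhat), ((π (φ x h) : H) : K) = x * ((π h : H) : K) * x⁻¹)
    (hfixA : ∀ (x : K) (a : A), φ x (ι a) = ι a)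
    (hinner : ∀ (h' h : Hhat), φ ((π h' : H) : K) h = h' * h * h'⁻¹)
    (Khat : Type*) [Group Khat] (j : Hhat →* Khat) (p : Khat →* K)
    (hj : Function.Injective j) (hp : Function.Surjective p)
    (hpj : ∀ h : Hhat, p (j h) = ((π h : H) : K))
    (hpker : p.ker = Subgroup.map j ι.range)
    (hpcent : p.ker ≤ Subgroup.center Khat)
    (hconj : ∀ (xhat : Khat) (h : Hhat), xhat * j h * xhat⁻¹ = j (φ (p xhat) h))
    (τ : MulAut K) (hτH : H.map τ.toMonoidHom = H)
    (σhat : MulAut Hhat)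
    (hσπ : ∀ h : Hhat, ((π (σhat h) : H) : K) = τ ((π h : H) : K))
    (hσA : ∀ a : A, σhat (ι a) = ι a)
    (hσφ : ∀ (x : K) (h : Hhat), σhat (φ x h) = φ (τ x) (σhat h)) :
    ∃ τhat : MulAut Khat,
      (∀ h : Hhat, τhat (j h) = j (σhat h)) ∧
      (∀ xhat : Khat, p (τhat xhat) = τ (p xhat)) :=
  central_extension_lift_automorphism_general K H hcyc A hdiv Hhat ι π hπ hker φ Khat j p hj hp hpj
    hpker hpcent hconj τ hτH σhat hσπ hσφ
end

section
/- Let C be an abelian group acting on a group Ĥ via a homomorphism φ : C → Aut(Ĥ), let D be a subgroup of C, and let θ : D → Ĥ be a group homomorphism such that (i) every element of θ(D) is fixed by φ_c for every c ∈ C, and (ii) for every y ∈ D the automorphism φ_y is conjugation by θ(y), i.e. φ_y(ĥ) = θ(y)·ĥ·θ(y)⁻¹ for all ĥ ∈ Ĥ. Then the set Δ*(D) = {(θ(y), y⁻¹) : y ∈ D} is a subgroup of the semidirect product Ĥ ⋊_φ C, and Δ*(D) is contained in the center of Ĥ ⋊_φ C. -/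
/-! Since `φ` fixes `θ(D)` pointwise, `y ↦ (θ y, y⁻¹)` is a homomorphism, so its image is a
subgroup. Each `(θ y, y⁻¹)` is central: `y⁻¹` is central in the abelian group `C`, and
`φ_{y⁻¹}` is conjugation by `θ(y)⁻¹`, which is exactly what commuting past the factor `θ y`
requires. -/

namespace SemidirectProduct

variable {N G : Type*} [Group N] [Group G] {φ : G →* MulAut N}

def pairHomOfFixed {K : Type*} [Group K] (θ : K →* N) (ψ : K →* G)
    (hfix : ∀ k k', φ (ψ k) (θ k') = θ k') : K →* N ⋊[φ] G where
  toFun k := ⟨θ k, ψ k⟩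
  map_one' := by ext <;> simp
  map_mul' k k' := by ext <;> simp [hfix]

theorem mk_mem_center {n : N} {g : G} (hg : g ∈ Subgroup.center G)
    (hn : ∀ c, φ c n = n) (hφ : φ g = MulAut.conj n⁻¹) :
    (⟨n, g⟩ : N ⋊[φ] G) ∈ Subgroup.center (N ⋊[φ] G) := by
  rw [Subgroup.mem_center_iff]
  intro x
  ext
  · simp [hn, hφ, mul_assoc]
  · simpa using Subgroup.mem_center_iff.mp hg x.right

end SemidirectProduct

open SemidirectProduct in
/-- The "inverse diagonal" `Δ*(D) = {(θ(y), y⁻¹) : y ∈ D}` (formula 4.10.1 of the paper)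
is a subgroup of the semidirect product `Ĥ ⋊[φ] C`, contained in its center. -/
theorem inverse_diagonal_is_central_subgroup
    (C : Type*) [CommGroup C] (Hhat : Type*) [Group Hhat]
    (φ : C →* MulAut Hhat) (D : Subgroup C) (θ : ↥D →* Hhat)
    (hfix : ∀ (c : C) (y : ↥D), φ c (θ y) = θ y)
    (hconj : ∀ (y : ↥D) (h : Hhat), φ (y : C) h = θ y * h * (θ y)⁻¹) :
    ∃ Δ : Subgroup (Hhat ⋊[φ] C),
      (Δ : Set (Hhat ⋊[φ] C)) =
        {x | ∃ y : ↥D, x = ⟨θ y, (y : C)⁻¹⟩} ∧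
      Δ ≤ Subgroup.center (Hhat ⋊[φ] C) := by
  let f := pairHomOfFixed θ (invMonoidHom.comp D.subtype) fun _ y => hfix _ y
  refine ⟨f.range, ?_, ?_⟩
  · ext x
    exact exists_congr fun y => eq_comm
  · rintro _ ⟨y, rfl⟩
    have hφ : φ (y : C) = MulAut.conj (θ y) := MulEquiv.ext (hconj y)
    refine mk_mem_center (Subgroup.mem_center_iff.mpr fun _ => mul_comm _ _) (hfix · y) ?_
    simp [hφ]
end
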